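/- arXiv:2503.13776 — 2 statements merged into one kernel-verified Lean document; each statement's English description precedes it below -/
import Mathlib

section
/- Under the stated assumptions, M_c(L^∨,U_□) ≤ 2a: there is a measurable control u : [−a_δ,a_δ] → U_□ whose integral curve from x₀ stays in the closure of Ω and ends at x₁ at time a_δ and whose cost ∫_{−a_δ}^{a_δ} L^∨(γ(t),u(t)) dt equals 2a (namely, follow η with control (1,0) on [−λa,λa] and stand still with control (0,0) otherwise); hence the infimum M_c(L^∨,U_□) is at most 2a. -/
/-!
The competitor runs along `η` with control `(1, 0)` during `[-λa, λa]` and rests with control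
`(0, 0)` otherwise, so its position at time `t` is `t` clamped to `[-λa, λa]`. It never leaves `η`,
which lies in the closure of `Ω` by assumption, and `r` vanishes on `η`. Since `a < λa`, the factor
`χ` of `L^∨` is on exactly for `t ∈ [-a, a]`, where the control has sup-norm `1`; hence the cost
is `2a`.
-/

open MeasureTheory Set Real ENNReal

noncomputable section

namespace SRGap

/-- The state space `ℝ^d`. -/
abbrev E (d : ℕ) := EuclideanSpace ℝ (Fin d)

/-- Build a vector of `ℝ^d` from its coordinates. -/
def mk (d : ℕ) (v : Fin d → ℝ) : E d := (EuclideanSpace.equiv (Fin d) ℝ).symm v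

/-- `k`-th coordinate (0-indexed), with junk value `0` out of range. -/
def coord {d : ℕ} (x : E d) (k : ℕ) : ℝ := if h : k < d then x ⟨k, h⟩ else 0

/-- The vector field `f₁(x) = (1,0,…,0)`. -/
def f₁ (d : ℕ) : E d → E d := fun _ => mk d fun i => if i.val = 0 then 1 else 0

/-- The vector field `f₂(x) = (0,1,x₁,x₁²/2!,…,x₁^{d-2}/(d-2)!)`. -/
def f₂ (d : ℕ) : E d → E d := fun x =>
  mk d fun i => if i.val = 0 then 0 else coord x 0 ^ (i.val - 1) / (Nat.factorial (i.val - 1) : ℝ)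

/-- The controlled vector field `f(x,u) = u₁ f₁(x) + u₂ f₂(x)`. -/
def fvf (d : ℕ) : E d → ℝ × ℝ → E d := fun x u => u.1 • f₁ d x + u.2 • f₂ d x

/-- The straight curve `η(t) = (t,0,…,0)`. -/
def ηc (d : ℕ) (t : ℝ) : E d := mk d fun i => if i.val = 0 then t else 0

/-- The matrix `A_t` whose columns are `f₁(η(t)),…,f_d(η(t))`. -/
def Amat (d : ℕ) (t : ℝ) : Fin d → Fin d → ℝ := fun i j =>
  if j.val = 0 then (if i.val = 0 then 1 else 0)
  else if i.val < j.val then 0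
  else t ^ (i.val - j.val) / (Nat.factorial (i.val - j.val) : ℝ)

/-- The map `φ(x) = A_{x₁} x`. -/
def φmap (d : ℕ) (x : E d) : E d := mk d fun i => ∑ j, Amat d (coord x 0) i j * x j

/-- The map `φ⁻¹(x) = A_{-x₁} x`. -/
def φinv (d : ℕ) (x : E d) : E d := mk d fun i => ∑ j, Amat d (-(coord x 0)) i j * x j

/-- `r(x) = ‖π(φ⁻¹(x))‖`, where `π` projects onto coordinates `x₃,…,x_d` (1-indexed). -/
def rfun (d : ℕ) (x : E d) : ℝ :=
  Real.sqrt (∑ i : Fin d, if 2 ≤ i.val then (φinv d x) i ^ 2 else 0)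

/-- `χ(s)`: indicator of `[-a,a]`. -/
def χ (a s : ℝ) : ℝ := if s ∈ Icc (-a) a then 1 else 0

/-- `‖u‖_∞ = max(|u₁|,|u₂|)` on `ℝ²`. -/
def supNorm (u : ℝ × ℝ) : ℝ := max |u.1| |u.2|

/-- Euclidean distance on `ℝ²`. -/
def edist2 (u v : ℝ × ℝ) : ℝ := Real.sqrt ((u.1 - v.1) ^ 2 + (u.2 - v.2) ^ 2)

/-- `Δ(u)`: Euclidean distance from `u` to the four corners `(±1,±1)`. -/
def Δcorners (u : ℝ × ℝ) : ℝ :=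
  min (min (edist2 u (1, 1)) (edist2 u (1, -1))) (min (edist2 u (-1, 1)) (edist2 u (-1, -1)))

/-- `L^∨(x,u) = χ(x₁)(‖u‖_∞ + r(x)²)`. -/
def Lvee (d : ℕ) (a : ℝ) (x : E d) (u : ℝ × ℝ) : ℝ := χ a (coord x 0) * (supNorm u + rfun d x ^ 2)

/-- `L^∨∨(x,u) = χ(x₁)(1 + 2Δ(u) + r(x)²)`. -/
def Lveevee (d : ℕ) (a : ℝ) (x : E d) (u : ℝ × ℝ) : ℝ :=
  χ a (coord x 0) * (1 + 2 * Δcorners u + rfun d x ^ 2)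

/-- `L⁻(x,u) = χ(x₁)(1 + r(x)²)`. -/
def Lminus (d : ℕ) (a : ℝ) (x : E d) (_u : ℝ × ℝ) : ℝ := χ a (coord x 0) * (1 + rfun d x ^ 2)

/-- The square of controls `U_□ = [-1,1]×[-1,1]`. -/
def Usq : Set (ℝ × ℝ) := Icc (-1 : ℝ) 1 ×ˢ Icc (-1 : ℝ) 1

/-- The four corners `U_:: = {(±1,±1)}`. -/
def Ucorners : Set (ℝ × ℝ) := {(1, 1), (1, -1), (-1, 1), (-1, -1)}

/-- `(0, ξ_b(t)) ∈ ℝ^d`: first coordinate `0`, remaining coordinates `ξ_b(t) ∈ ℝ^{d-1}`. -/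
def ξfull (d : ℕ) (p : ℝ → ℝ) (a b t : ℝ) : E d := mk d fun i =>
  if i.val = d - 2 then p t * (Real.cos (b * t) / b) + (1 - p t) * (Real.cos (a * b) / b)
  else if i.val = d - 1 then p t * (Real.sin (b * t) / b) + (1 - p t) * (Real.sin (a * b) / b)
  else 0

/-- The spiraling tube `𝕊`. -/
def Sspiral (d : ℕ) (a b : ℝ) : Set (E d) :=
  {z | ∃ x : E d, z = φmap d x ∧ coord x 0 ∈ Icc (-a) a ∧
    (∑ i : Fin d,
      if i.val = d - 2 then (x i - Real.cos (b * coord x 0) / b) ^ 2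
      else if i.val = d - 1 then (x i - Real.sin (b * coord x 0) / b) ^ 2
      else if 1 ≤ i.val then x i ^ 2 else 0) ≤ 1 / b ^ 2}

/-- The lateral disk `φ({s} × B̄(ξ_b(s), 1/b))`. -/
def sideDisk (d : ℕ) (p : ℝ → ℝ) (a b s : ℝ) : Set (E d) :=
  {z | ∃ x : E d, z = φmap d x ∧ coord x 0 = s ∧
    (∑ i : Fin d, if 1 ≤ i.val then (x i - ξfull d p a b s i) ^ 2 else 0) ≤ 1 / b ^ 2}

/-- Properties of the bump function `𝔭`. -/
def PProps (p : ℝ → ℝ) (a b : ℝ) : Prop :=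
  ContDiff ℝ (⊤ : ℕ∞) p ∧ (∀ t, p t ∈ Icc (0 : ℝ) 1) ∧
  (∀ t ∈ Icc (-a + 1 / b ^ 2) (a - 1 / b ^ 2), p t = 1) ∧
  (∀ t, t ∉ Ioo (-a + 1 / b ^ 3) (a - 1 / b ^ 3) → p t = 0)

/-- Admissible control `u` with values in `W` on `[t0,t1]`, with integral curve `γ` from `p`. -/
def Ctrl (d : ℕ) (f : E d → ℝ × ℝ → E d) (W : Set (ℝ × ℝ)) (t0 t1 : ℝ) (p : E d)
    (u : ℝ → ℝ × ℝ) (γ : ℝ → E d) : Prop :=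
  Measurable u ∧ (∀ t ∈ Icc t0 t1, u t ∈ W) ∧
  IntervalIntegrable (fun s => f (γ s) (u s)) volume t0 t1 ∧
  ∀ t ∈ Icc t0 t1, γ t = p + ∫ s in t0..t, f (γ s) (u s)

/-- Young measure `(ν_t)` on `W` over `[t0,t1]`, with integral curve `γ` from `p`. -/
def Young (d : ℕ) (f : E d → ℝ × ℝ → E d) (W : Set (ℝ × ℝ)) (t0 t1 : ℝ) (p : E d)
    (ν : ℝ → Measure (ℝ × ℝ)) (γ : ℝ → E d) : Prop :=
  (∀ t, IsProbabilityMeasure (ν t)) ∧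
  (∀ t ∈ Icc t0 t1, ν t Wᶜ = 0) ∧
  (∀ A : Set (ℝ × ℝ), MeasurableSet A → Measurable fun t => ν t A) ∧
  (∀ᵐ t ∂volume.restrict (Icc t0 t1), Integrable (fun w : ℝ × ℝ => ‖w‖) (ν t)) ∧
  IntervalIntegrable (fun s => ∫ w, f (γ s) w ∂ν s) volume t0 t1 ∧
  ∀ t ∈ Icc t0 t1, γ t = p + ∫ s in t0..t, ∫ w, f (γ s) w ∂ν s

/-- `M_c(ℒ,W)`: infimum of the cost over admissible controls, state constraint `S`,
initial point `p` at time `t0`, endpoint `q` at time `t1`; value in `ℝ∪{±∞}`, `+∞` if infeasible. -/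
def Mc (d : ℕ) (W : Set (ℝ × ℝ)) (ℒ : E d → ℝ × ℝ → ℝ) (t0 t1 : ℝ) (p q : E d)
    (S : Set (E d)) : EReal :=
  sInf {c : EReal | ∃ u γ, Ctrl d (fvf d) W t0 t1 p u γ ∧ (∀ t ∈ Icc t0 t1, γ t ∈ S) ∧
    γ t1 = q ∧ IntervalIntegrable (fun t => ℒ (γ t) (u t)) volume t0 t1 ∧
    c = ((∫ t in t0..t1, ℒ (γ t) (u t) : ℝ) : EReal)}

/-- `M̊_c(ℒ,W)`: as `Mc`, over controls whose curve moreover satisfies `r(γ(t)) ≠ 0` a.e. -/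
def McRing (d : ℕ) (W : Set (ℝ × ℝ)) (ℒ : E d → ℝ × ℝ → ℝ) (t0 t1 : ℝ) (p q : E d)
    (S : Set (E d)) : EReal :=
  sInf {c : EReal | ∃ u γ, Ctrl d (fvf d) W t0 t1 p u γ ∧ (∀ t ∈ Icc t0 t1, γ t ∈ S) ∧
    γ t1 = q ∧ (∀ᵐ t ∂volume.restrict (Icc t0 t1), rfun d (γ t) ≠ 0) ∧
    IntervalIntegrable (fun t => ℒ (γ t) (u t)) volume t0 t1 ∧
    c = ((∫ t in t0..t1, ℒ (γ t) (u t) : ℝ) : EReal)}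

/-- `M_y(ℒ,W)`: infimum of the relaxed cost over Young measures. -/
def My (d : ℕ) (W : Set (ℝ × ℝ)) (ℒ : E d → ℝ × ℝ → ℝ) (t0 t1 : ℝ) (p q : E d)
    (S : Set (E d)) : EReal :=
  sInf {c : EReal | ∃ ν γ, Young d (fvf d) W t0 t1 p ν γ ∧ (∀ t ∈ Icc t0 t1, γ t ∈ S) ∧
    γ t1 = q ∧ (∀ᵐ t ∂volume.restrict (Icc t0 t1), Integrable (fun w => ℒ (γ t) w) (ν t)) ∧
    IntervalIntegrable (fun t => ∫ w, ℒ (γ t) w ∂ν t) volume t0 t1 ∧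
    c = ((∫ t in t0..t1, ∫ w, ℒ (γ t) w ∂ν t : ℝ) : EReal)}

/-- Sub-Riemannian length of a control on `[t0,t1]`. -/
def srLen (u : ℝ → ℝ × ℝ) (t0 t1 : ℝ) : ℝ := ∫ t in t0..t1, Real.sqrt ((u t).1 ^ 2 + (u t).2 ^ 2)

/-- `W`-horizontal curve on `[t0,t1]` (with integrable control norm). -/
def Horiz (d : ℕ) (W : Set (ℝ × ℝ)) (t0 t1 : ℝ) (u : ℝ → ℝ × ℝ) (γ : ℝ → E d) : Prop :=
  Measurable u ∧ (∀ t ∈ Icc t0 t1, u t ∈ W) ∧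
  IntervalIntegrable (fun s => fvf d (γ s) (u s)) volume t0 t1 ∧
  IntervalIntegrable (fun t => Real.sqrt ((u t).1 ^ 2 + (u t).2 ^ 2)) volume t0 t1 ∧
  ∀ t ∈ Icc t0 t1, γ t = γ t0 + ∫ s in t0..t, fvf d (γ s) (u s)

/-- `p` and `q` can be joined by a `W`-horizontal curve of sub-Riemannian length at most `len`
whose image lies in `S`. -/
def HorizJoin (d : ℕ) (W : Set (ℝ × ℝ)) (p q : E d) (len : ℝ) (S : Set (E d)) : Prop :=
  ∃ (T : ℝ) (u : ℝ → ℝ × ℝ) (γ : ℝ → E d), 0 ≤ T ∧ Horiz d W 0 T u γ ∧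
    γ 0 = p ∧ γ T = q ∧ srLen u 0 T ≤ len ∧ ∀ t ∈ Icc 0 T, γ t ∈ S

/-- Closed sub-Riemannian ball: endpoints of `ℝ²`-horizontal curves from `p` of length `≤ ρ`. -/
def BSR (d : ℕ) (p : E d) (ρ : ℝ) : Set (E d) :=
  {z | ∃ (T : ℝ) (u : ℝ → ℝ × ℝ) (γ : ℝ → E d), 0 ≤ T ∧ Horiz d univ 0 T u γ ∧
    γ 0 = p ∧ γ T = z ∧ srLen u 0 T ≤ ρ}

/-- The weighted box `Q(c,ρ)` with weights `(1,1,2,3,…,d-1)`. -/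
def Qbox (d : ℕ) (c ρ : ℝ) : Set (E d) := {v | ∀ i : Fin d, |v i| ≤ c * ρ ^ max 1 i.val}

/-- The winding vector field `Θ(v) = (-v₂,v₁)/(v₁²+v₂²)`. -/
def Θfun (v : ℝ × ℝ) : ℝ × ℝ := (-v.2 / (v.1 ^ 2 + v.2 ^ 2), v.1 / (v.1 ^ 2 + v.2 ^ 2))

/-- `γ̊(t) = τ(φ⁻¹(γ(t)) + (0,ξ_b(γ₁(t)))) ∈ ℝ²`, `τ` projecting to the last two coordinates. -/
def ringc (d : ℕ) (p : ℝ → ℝ) (a b : ℝ) (γ : ℝ → E d) (t : ℝ) : ℝ × ℝ :=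
  (coord (φinv d (γ t) + ξfull d p a b (coord (γ t) 0)) (d - 2),
   coord (φinv d (γ t) + ξfull d p a b (coord (γ t) 0)) (d - 1))

/-- Winding integral `∫ ⟨Θ(g(t)), g'(t)⟩ dt`. -/
def windInt (g : ℝ → ℝ × ℝ) (i0 i1 : ℝ) : ℝ :=
  ∫ t in i0..i1, ((Θfun (g t)).1 * (deriv g t).1 + (Θfun (g t)).2 * (deriv g t).2)

/-- The standing numerical assumptions on `a`, `b`, `δ`, `λ`. -/
def Params (a b δ lam : ℝ) : Prop :=
  0 < a ∧ a < 1 ∧ 1 < b ∧ 2 * π < a * b ∧ 0 < δ ∧ 1 < lam ∧ lam < 2 ∧ (lam - 1) * a < δ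

/-- Standing assumptions on `Γ`: open, bounded, inside `(ℝ∖[-a,a])×ℝ^{d-1}`, and,
with `Ω = 𝕊 ∪ Γ`: `Ω` contains `x₀` and `x₁` and `closure Ω` contains `η([-a_δ,a_δ])`. -/
def ΓBasic (d : ℕ) (a b δ lam : ℝ) (Γ : Set (E d)) : Prop :=
  IsOpen Γ ∧ Bornology.IsBounded Γ ∧ (Γ ⊆ {x : E d | coord x 0 ∉ Icc (-a) a}) ∧
  ηc d (-(lam * a)) ∈ Sspiral d a b ∪ Γ ∧ ηc d (lam * a) ∈ Sspiral d a b ∪ Γ ∧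
  (fun t => ηc d t) '' Icc (-(a + δ)) (a + δ) ⊆ closure (Sspiral d a b ∪ Γ)

/-- Joinability of the lateral disks to `x₀` resp. `x₁` through `Γ` by `U_::`-horizontal curves
of length at most `δ/2`. -/
def JoinHyp (d : ℕ) (p : ℝ → ℝ) (a b δ lam : ℝ) (Γ : Set (E d)) : Prop :=
  (∀ q ∈ sideDisk d p a b (-a), HorizJoin d Ucorners (ηc d (-(lam * a))) q (δ / 2) (Γ ∪ {q})) ∧
  (∀ q ∈ sideDisk d p a b a, HorizJoin d Ucorners q (ηc d (lam * a)) (δ / 2) (Γ ∪ {q}))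

/-- Reachability: some admissible control with values in `W` joins `x₀` to `x₁` within `closure Ω`. -/
def ReachHyp (d : ℕ) (W : Set (ℝ × ℝ)) (a b δ lam : ℝ) (Γ : Set (E d)) : Prop :=
  ∃ u γ, Ctrl d (fvf d) W (-(a + δ)) (a + δ) (ηc d (-(lam * a))) u γ ∧
    (∀ t ∈ Icc (-(a + δ)) (a + δ), γ t ∈ closure (Sspiral d a b ∪ Γ)) ∧
    γ (a + δ) = ηc d (lam * a)

/-- Uniform ball-box estimates with constants `c̄`, `C̄`, `δ₀` on the compact set `K`. -/
def BallBoxHyp (d : ℕ) (cbar Cbar δ0 : ℝ) (K : Set (E d)) : Prop :=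
  0 < cbar ∧ 0 < Cbar ∧ 0 < δ0 ∧ IsCompact K ∧
  ∀ y : E d, φmap d y ∈ K → ∀ ρ : ℝ, 0 < ρ → ρ ≤ δ0 →
    (fun v => φmap d (y + v)) '' Qbox d cbar ρ ⊆ BSR d (φmap d y) ρ ∧
    BSR d (φmap d y) ρ ⊆ (fun v => φmap d (y + v)) '' Qbox d Cbar ρ

theorem intervalIntegrable_indicator_Icc_one (A B t₀ t₁ : ℝ) :
    IntervalIntegrable ((Icc A B).indicator (1 : ℝ → ℝ)) volume t₀ t₁ :=
  ((integrableOn_const measure_Icc_lt_top.ne).integrable_indicator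
    measurableSet_Icc).intervalIntegrable

theorem intervalIntegral_indicator_Icc_one {A B t₀ t : ℝ} (hA : t₀ ≤ A) (ht : t₀ ≤ t) :
    ∫ s in t₀..t, (Icc A B).indicator 1 s = max (min B t - A) 0 := by
  have hIoc : (Icc A B).indicator (1 : ℝ → ℝ) =ᵐ[volume] (Ioc A B).indicator 1 :=
    indicator_ae_eq_of_ae_eq_set Ioc_ae_eq_Icc.symm
  rw [intervalIntegral.integral_of_le ht, integral_congr_ae (ae_restrict_of_ae hIoc),
    integral_indicator_one measurableSet_Ioc, Measure.real_def,
    Measure.restrict_apply measurableSet_Ioc, Ioc_inter_Ioc, max_eq_left hA, ← Measure.real_def,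
    Real.volume_real_Ioc, min_comm]

theorem add_intervalIntegral_indicator_Icc_one {A B t₀ : ℝ} (hA : t₀ ≤ A) (t : ℝ) :
    A + ∫ s in t₀..t, (Icc A B).indicator 1 s = max A (min B t) := by
  rcases le_total t₀ t with ht | ht
  · rw [intervalIntegral_indicator_Icc_one hA ht, ← max_add_add_left]
    ring_nf
    exact max_comm _ _
  · rw [intervalIntegral.integral_symm, intervalIntegral_indicator_Icc_one (ht.trans hA) ht,
      max_eq_right (by linarith [min_le_right B t₀]),
      max_eq_left ((min_le_right B t).trans (ht.trans hA))]
    ring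

section StraightLine

variable {d : ℕ}

theorem coord_ηc (hd : 0 < d) (s : ℝ) : coord (ηc d s) 0 = s := by
  simp [coord, hd, ηc, mk]

theorem φinv_ηc_of_ne_zero (s : ℝ) {i : Fin d} (hi : i.val ≠ 0) : φinv d (ηc d s) i = 0 := by
  change ∑ j, Amat d (-(coord (ηc d s) 0)) i j * ηc d s j = 0
  refine Finset.sum_eq_zero fun j _ => ?_
  by_cases hj : j.val = 0 <;> simp [ηc, mk, Amat, hj, hi]

theorem rfun_ηc (s : ℝ) : rfun d (ηc d s) = 0 := by
  refine (congrArg Real.sqrt (Finset.sum_eq_zero fun i _ => ?_)).trans Real.sqrt_zero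
  split_ifs with hi
  · rw [φinv_ηc_of_ne_zero s (by omega), zero_pow two_ne_zero]
  · rfl

theorem Lvee_ηc (hd : 0 < d) (a s : ℝ) (u : ℝ × ℝ) : Lvee d a (ηc d s) u = χ a s * supNorm u := by
  rw [Lvee, coord_ηc hd, rfun_ηc]
  ring

theorem ηc_add_smul_f₁ (s r : ℝ) (x : E d) : ηc d s + r • f₁ d x = ηc d (s + r) := by
  ext i
  by_cases hi : i.val = 0 <;> simp [ηc, f₁, mk, hi]

theorem ctrl_ηc {W : Set (ℝ × ℝ)} {t₀ t₁ s : ℝ} {g : ℝ → ℝ} (hg : Measurable g)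
    (hgi : IntervalIntegrable g volume t₀ t₁) (hW : ∀ t ∈ Icc t₀ t₁, (g t, 0) ∈ W) :
    Ctrl d (fvf d) W t₀ t₁ (ηc d s) (fun t => (g t, 0))
      (fun t => ηc d (s + ∫ τ in t₀..t, g τ)) := by
  have hfvf : ∀ x : E d, ∀ c : ℝ, fvf d x (c, 0) = c • f₁ d 0 := fun x c => by
    simp [fvf, f₁]
  refine ⟨hg.prodMk measurable_const, hW, ?_, fun t _ => ?_⟩ <;> simp only [hfvf]
  · exact ⟨hgi.1.smul_const _, hgi.2.smul_const _⟩
  · rw [intervalIntegral.integral_smul_const, ηc_add_smul_f₁]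

theorem ctrl_indicator_Icc_ηc {A B t₀ t₁ : ℝ} (hA : t₀ ≤ A) :
    Ctrl d (fvf d) Usq t₀ t₁ (ηc d A) (fun t => ((Icc A B).indicator 1 t, 0))
      (fun t => ηc d (max A (min B t))) := by
  have hctrl := ctrl_ηc (d := d) (W := Usq) (t₀ := t₀) (t₁ := t₁) (s := A)
    (g := (Icc A B).indicator 1)
    (measurable_const.indicator measurableSet_Icc)
    (intervalIntegrable_indicator_Icc_one A B t₀ t₁)
    fun t _ => by by_cases ht : t ∈ Icc A B <;> simp [ht, Usq]
  simpa only [add_intervalIntegral_indicator_Icc_one hA] using hctrl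

theorem Lvee_ηc_indicator_Icc (hd : 0 < d) {a B : ℝ} (haB : a ≤ B) (t : ℝ) :
    Lvee d a (ηc d (max (-B) (min B t))) ((Icc (-B) B).indicator 1 t, 0) =
      (Icc (-a) a).indicator 1 t := by
  rw [Lvee_ηc hd]
  by_cases ht : t ∈ Icc (-B) B
  · rw [min_eq_right ht.2, max_eq_right ht.1]
    simp [χ, supNorm, ht, indicator_apply]
  · have hta : t ∉ Icc (-a) a := fun h => ht ⟨by linarith [h.1], by linarith [h.2]⟩
    simp [supNorm, ht, hta]

end StraightLine

theorem statement7_general (d : ℕ) (hd : 4 ≤ d) (a b δ lam : ℝ) (hP : Params a b δ lam)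
    (Γ : Set (E d)) (hΓ : ΓBasic d a b δ lam Γ) :
    (∃ u γ, Ctrl d (fvf d) Usq (-(a + δ)) (a + δ) (ηc d (-(lam * a))) u γ ∧
      (∀ t ∈ Icc (-(a + δ)) (a + δ), γ t ∈ closure (Sspiral d a b ∪ Γ)) ∧
      γ (a + δ) = ηc d (lam * a) ∧
      (∀ t ∈ Icc (-(lam * a)) (lam * a), u t = (1, 0)) ∧
      (∀ t ∈ Icc (-(a + δ)) (a + δ), t ∉ Icc (-(lam * a)) (lam * a) → u t = (0, 0)) ∧
      (∫ t in (-(a + δ))..(a + δ), Lvee d a (γ t) (u t)) = 2 * a) ∧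
    Mc d Usq (Lvee d a) (-(a + δ)) (a + δ) (ηc d (-(lam * a))) (ηc d (lam * a))
        (closure (Sspiral d a b ∪ Γ)) ≤ ((2 * a : ℝ) : EReal) := by
  obtain ⟨ha, -, -, -, -, hlam, -, hlamδ⟩ := hP
  have haB : a < lam * a := by nlinarith
  have hBδ : lam * a ≤ a + δ := by nlinarith
  have hctrl := ctrl_indicator_Icc_ηc (d := d) (B := lam * a) (t₁ := a + δ) (neg_le_neg hBδ)
  have hstate : ∀ t ∈ Icc (-(a + δ)) (a + δ),
      ηc d (max (-(lam * a)) (min (lam * a) t)) ∈ closure (Sspiral d a b ∪ Γ) := fun t _ =>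
    hΓ.2.2.2.2.2 ⟨_, ⟨(neg_le_neg hBδ).trans (le_max_left _ _),
      (max_le (by linarith) (min_le_left _ _)).trans hBδ⟩, rfl⟩
  have hend : max (-(lam * a)) (min (lam * a) (a + δ)) = lam * a := by
    rw [min_eq_left hBδ, max_eq_right (by linarith)]
  have hLvee := Lvee_ηc_indicator_Icc (d := d) (by omega) haB.le
  have hcost : ∫ t in (-(a + δ))..(a + δ), (Icc (-a) a).indicator 1 t = 2 * a := by
    have := add_intervalIntegral_indicator_Icc_one (A := -a) (B := a) (t₀ := -(a + δ))
      (by linarith) (a + δ)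
    rw [min_eq_left (by linarith), max_eq_right (by linarith)] at this
    linarith
  refine ⟨⟨_, _, hctrl, hstate, congrArg (ηc d) hend, fun t ht => by simp [ht],
    fun t _ ht => by simp [ht], by simpa only [hLvee] using hcost⟩,
    sInf_le ⟨_, _, hctrl, hstate, congrArg (ηc d) hend, ?_, by simp only [hLvee, hcost]⟩⟩
  simpa only [hLvee] using intervalIntegrable_indicator_Icc_one (-a) a (-(a + δ)) (a + δ)

/-- Lemma: `M_c(L^∨,U_□) ≤ 2a`. -/
theorem statement7 (d : ℕ) (hd : 4 ≤ d) (a b δ lam : ℝ) (hP : Params a b δ lam)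
    (p : ℝ → ℝ) (hp : PProps p a b) (Γ : Set (E d)) (hΓ : ΓBasic d a b δ lam Γ)
    (hJ : JoinHyp d p a b δ lam Γ) :
    (∃ u γ, Ctrl d (fvf d) Usq (-(a + δ)) (a + δ) (ηc d (-(lam * a))) u γ ∧
      (∀ t ∈ Icc (-(a + δ)) (a + δ), γ t ∈ closure (Sspiral d a b ∪ Γ)) ∧
      γ (a + δ) = ηc d (lam * a) ∧
      (∀ t ∈ Icc (-(lam * a)) (lam * a), u t = (1, 0)) ∧
      (∀ t ∈ Icc (-(a + δ)) (a + δ), t ∉ Icc (-(lam * a)) (lam * a) → u t = (0, 0)) ∧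
      (∫ t in (-(a + δ))..(a + δ), Lvee d a (γ t) (u t)) = 2 * a) ∧
    Mc d Usq (Lvee d a) (-(a + δ)) (a + δ) (ηc d (-(lam * a))) (ηc d (lam * a))
        (closure (Sspiral d a b ∪ Γ)) ≤ ((2 * a : ℝ) : EReal) :=
  statement7_general d hd a b δ lam hP Γ hΓ

end SRGap
end
end

section
/- Let W ⊆ ℝ² and let Y : ℝ^d×ℝ² → ℝ satisfy Y(x,u) ≥ 0 for every (x,u) and Y(x,u) ≥ u₁ whenever x₁ ∈ [−a,a]. If (ν_t)_{t∈[−a_δ,a_δ]} is a Young measure on W whose integral curve γ from x₀ satisfies γ(a_δ) = x₁, then ∫_{−a_δ}^{a_δ} ∫_W Y(γ(t),u) dν_t(u) dt ≥ 2a. In particular, under the stated assumptions one has M_c(L^∨,U_□) ≥ 2a and M_y(L^∨∨,U) ≥ 2a. -/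
open MeasureTheory Set Real ENNReal

noncomputable section

namespace SRGap

section AuxLemmas

lemma ofReal_integral_le {α : Type*} [MeasurableSpace α] {μ : MeasureTheory.Measure α} {f : α → ℝ}
    (hf : MeasureTheory.Integrable f μ) :
    ENNReal.ofReal (∫ x, f x ∂μ) ≤ ∫⁻ x, ENNReal.ofReal (f x) ∂μ := by
  calc ENNReal.ofReal (∫ x, f x ∂μ) ≤ ENNReal.ofReal (∫ x, max (f x) 0 ∂μ) :=
        ENNReal.ofReal_le_ofReal
          (MeasureTheory.integral_mono hf hf.pos_part (fun x => le_max_left _ _))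
    _ = ∫⁻ x, ENNReal.ofReal (max (f x) 0) ∂μ :=
        MeasureTheory.ofReal_integral_eq_lintegral_ofReal hf.pos_part
          (MeasureTheory.ae_of_all _ fun x => le_max_right _ _)
    _ = ∫⁻ x, ENNReal.ofReal (f x) ∂μ := by
        congr 1; funext x
        rcases le_total (f x) 0 with h | h
        · simp [max_eq_right h, ENNReal.ofReal_of_nonpos h]
        · simp [max_eq_left h]

variable {d : ℕ}

lemma fvf_coord (hd : 0 < d) (x : E d) (w : ℝ × ℝ) : fvf d x w ⟨0, hd⟩ = w.1 := by
  simp [fvf, f₁, f₂, mk, PiLp.add_apply, PiLp.smul_apply, smul_eq_mul]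

lemma coord_eq (hd : 0 < d) (x : E d) : coord x 0 = x ⟨0, hd⟩ := dif_pos hd

lemma ηc_coord (hd : 0 < d) (c : ℝ) : (ηc d c) ⟨0, hd⟩ = c := by simp [ηc, mk]

lemma fvf_cont (x : E d) : Continuous (fun w : ℝ × ℝ => fvf d x w) :=
  (continuous_fst.smul continuous_const).add (continuous_snd.smul continuous_const)

lemma fvf_norm (x : E d) (w : ℝ × ℝ) :
    ‖fvf d x w‖ ≤ (‖f₁ d x‖ + ‖f₂ d x‖) * ‖w‖ := by
  have h1 : ‖w.1‖ ≤ ‖w‖ := norm_fst_le w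
  have h2 : ‖w.2‖ ≤ ‖w‖ := norm_snd_le w
  calc ‖fvf d x w‖ ≤ ‖w.1 • f₁ d x‖ + ‖w.2 • f₂ d x‖ := norm_add_le _ _
    _ = ‖w.1‖ * ‖f₁ d x‖ + ‖w.2‖ * ‖f₂ d x‖ := by rw [norm_smul, norm_smul]
    _ ≤ (‖f₁ d x‖ + ‖f₂ d x‖) * ‖w‖ := by
        nlinarith [norm_nonneg (f₁ d x), norm_nonneg (f₂ d x), norm_nonneg w]

lemma supNorm_nonneg (u : ℝ × ℝ) : 0 ≤ supNorm u :=
  le_trans (abs_nonneg u.1) (le_max_left _ _)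

lemma chi_cases (a s : ℝ) : χ a s = 0 ∨ χ a s = 1 := by unfold χ; split <;> simp

lemma Lvee_nonneg (a : ℝ) (x : E d) (w : ℝ × ℝ) : 0 ≤ Lvee d a x w := by
  unfold Lvee
  rcases chi_cases a (coord x 0) with h | h <;> rw [h]
  · simp
  · have := supNorm_nonneg w; nlinarith [sq_nonneg (rfun d x)]

lemma Lvee_ge (a : ℝ) (x : E d) (w : ℝ × ℝ) (h : coord x 0 ∈ Icc (-a) a) :
    w.1 ≤ Lvee d a x w := by
  unfold Lvee χ
  rw [if_pos h, one_mul]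
  have h1 : w.1 ≤ |w.1| := le_abs_self _
  have h2 : |w.1| ≤ supNorm w := le_max_left _ _
  nlinarith [sq_nonneg (rfun d x)]

lemma edist2_nonneg (u v : ℝ × ℝ) : 0 ≤ edist2 u v := Real.sqrt_nonneg _

lemma edist2_ge_fst (u v : ℝ × ℝ) : |u.1 - v.1| ≤ edist2 u v := by
  unfold edist2
  rw [← Real.sqrt_sq_eq_abs]
  apply Real.sqrt_le_sqrt; nlinarith [sq_nonneg (u.2 - v.2)]

lemma Δcorners_nonneg (u : ℝ × ℝ) : 0 ≤ Δcorners u :=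
  le_min (le_min (edist2_nonneg _ _) (edist2_nonneg _ _))
    (le_min (edist2_nonneg _ _) (edist2_nonneg _ _))

lemma Δcorners_ge (u : ℝ × ℝ) : u.1 - 1 ≤ Δcorners u := by
  unfold Δcorners
  have h1 := edist2_ge_fst u (1, 1)
  have h2 := edist2_ge_fst u (1, -1)
  have h3 := edist2_ge_fst u (-1, 1)
  have h4 := edist2_ge_fst u (-1, -1)
  simp only at h1 h2 h3 h4
  have a1 : u.1 - 1 ≤ |u.1 - 1| := le_abs_self _
  have a2 : u.1 + 1 ≤ |u.1 - (-1)| := by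
    rw [sub_neg_eq_add]; exact le_abs_self _
  refine le_min (le_min ?_ ?_) (le_min ?_ ?_) <;> linarith

lemma Lveevee_nonneg (a : ℝ) (x : E d) (w : ℝ × ℝ) : 0 ≤ Lveevee d a x w := by
  unfold Lveevee
  rcases chi_cases a (coord x 0) with h | h <;> rw [h]
  · simp
  · have := Δcorners_nonneg w; nlinarith [sq_nonneg (rfun d x)]

lemma Lveevee_ge (a : ℝ) (x : E d) (w : ℝ × ℝ) (h : coord x 0 ∈ Icc (-a) a) :
    w.1 ≤ Lveevee d a x w := by
  unfold Lveevee χ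
  rw [if_pos h, one_mul]
  have h1 := Δcorners_nonneg w
  have h2 := Δcorners_ge w
  have h3 := sq_nonneg (rfun d x)
  rcases le_total w.1 1 with h4 | h4 <;> nlinarith

end AuxLemmas

set_option maxHeartbeats 1000000 in
lemma key_lemma (d : ℕ) (hd0 : 0 < d) {a δ lam : ℝ} (ha : 0 < a) (hδ : 0 < δ)
    (hlam : 1 < lam) (W : Set (ℝ × ℝ)) (Y : E d → ℝ × ℝ → ℝ)
    (hY0 : ∀ x w, 0 ≤ Y x w)
    (hY1 : ∀ (x : E d) (w : ℝ × ℝ), coord x 0 ∈ Icc (-a) a → w.1 ≤ Y x w)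
    (ν : ℝ → Measure (ℝ × ℝ)) (γ : ℝ → E d)
    (hYg : Young d (fvf d) W (-(a + δ)) (a + δ) (ηc d (-(lam * a))) ν γ)
    (hend : γ (a + δ) = ηc d (lam * a)) :
    ENNReal.ofReal (2 * a)
      ≤ ∫⁻ t in Icc (-(a + δ)) (a + δ), ∫⁻ w, ENNReal.ofReal (Y (γ t) w) ∂ν t := by
  obtain ⟨hprob, hWc, hAmeas, hnint, hFint, heq⟩ := hYg
  set t0 : ℝ := -(a + δ) with ht0d
  set t1 : ℝ := a + δ with ht1d
  have ht01 : t0 ≤ t1 := by rw [ht0d, ht1d]; linarith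
  set i0 : Fin d := ⟨0, hd0⟩ with hi0
  set L0 : E d →L[ℝ] ℝ := EuclideanSpace.proj i0 with hL0
  set F : ℝ → E d := fun s => ∫ w, fvf d (γ s) w ∂ν s with hFd
  set g : ℝ → ℝ := fun s => L0 (F s) with hgd
  have hgint : IntervalIntegrable g volume t0 t1 :=
    ⟨L0.integrable_comp hFint.1, L0.integrable_comp hFint.2⟩
  have hsub : ∀ t ∈ Icc t0 t1, uIcc t0 t ⊆ uIcc t0 t1 := by
    intro t ht
    apply uIcc_subset_uIcc left_mem_uIcc
    rw [uIcc_of_le ht01]; exact ht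
  set h : ℝ → ℝ := fun t => -(lam * a) + ∫ s in t0..t, g s with hhd
  have hcoord : ∀ t ∈ Icc t0 t1, (γ t) i0 = h t := by
    intro t ht
    have h1 : IntervalIntegrable F volume t0 t := hFint.mono_set (hsub t ht)
    have h2 : (γ t) i0 = L0 (γ t) := rfl
    have e : L0 (ηc d (-(lam * a))) = -(lam * a) := ηc_coord hd0 _
    simp only [hhd, hgd]
    rw [h2, heq t ht, map_add, ← L0.intervalIntegral_comp_comm h1, e]
  have hcont : ContinuousOn h (Icc t0 t1) := by
    rw [hhd]
    apply continuousOn_const.add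
    have h1 : IntegrableOn g (uIcc t0 t1) volume := by
      rw [uIcc_of_le ht01]
      exact (intervalIntegrable_iff_integrableOn_Icc_of_le ht01).1 hgint
    have := intervalIntegral.continuousOn_primitive_interval (a := t0) (b := t1) h1
    rwa [uIcc_of_le ht01] at this
  have hht0 : h t0 = -(lam * a) := by rw [hhd]; simp
  have hht1 : h t1 = lam * a := by
    have h1 := hcoord t1 (right_mem_Icc.2 ht01)
    rw [hend, ηc_coord hd0] at h1
    exact h1.symm
  -- find T2 : first time h = a
  set Sa : Set ℝ := Icc t0 t1 ∩ h ⁻¹' {a} with hSad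
  have hSa_ne : Sa.Nonempty := by
    obtain ⟨s, hs, hval⟩ := intermediate_value_Icc ht01 hcont
      (show a ∈ Icc (h t0) (h t1) by rw [hht0, hht1]; constructor <;> nlinarith)
    exact ⟨s, hs, hval⟩
  have hSa_closed : IsClosed Sa :=
    hcont.preimage_isClosed_of_isClosed isClosed_Icc isClosed_singleton
  have hSa_bdd : BddBelow Sa := ⟨t0, fun x hx => hx.1.1⟩
  set T2 : ℝ := sInf Sa with hT2d
  have hT2mem : T2 ∈ Sa := hSa_closed.csInf_mem hSa_ne hSa_bdd
  have hT2Icc : T2 ∈ Icc t0 t1 := hT2mem.1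
  have hhT2 : h T2 = a := hT2mem.2
  -- find T1 : last time before T2 with h = -a
  set Sb : Set ℝ := Icc t0 T2 ∩ h ⁻¹' {-a} with hSbd
  have hcont2 : ContinuousOn h (Icc t0 T2) := hcont.mono (Icc_subset_Icc le_rfl hT2Icc.2)
  have hSb_ne : Sb.Nonempty := by
    obtain ⟨s, hs, hval⟩ := intermediate_value_Icc hT2Icc.1 hcont2
      (show -a ∈ Icc (h t0) (h T2) by rw [hht0, hhT2]; constructor <;> nlinarith)
    exact ⟨s, hs, hval⟩
  have hSb_closed : IsClosed Sb :=
    hcont2.preimage_isClosed_of_isClosed isClosed_Icc isClosed_singleton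
  have hSb_bdd : BddAbove Sb := ⟨T2, fun x hx => hx.1.2⟩
  set T1 : ℝ := sSup Sb with hT1d
  have hT1mem : T1 ∈ Sb := hSb_closed.csSup_mem hSb_ne hSb_bdd
  have hT1Icc : T1 ∈ Icc t0 T2 := hT1mem.1
  have hhT1 : h T1 = -a := hT1mem.2
  have hT12 : T1 ≤ T2 := hT1Icc.2
  have hT1t0 : t0 ≤ T1 := hT1Icc.1
  have hT2t1 : T2 ≤ t1 := hT2Icc.2
  -- on [T1, T2] the first coordinate stays in [-a, a]
  have hmid : ∀ t ∈ Icc T1 T2, h t ∈ Icc (-a) a := by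
    intro t ht
    have htIcc : t ∈ Icc t0 t1 := ⟨le_trans hT1t0 ht.1, le_trans ht.2 hT2t1⟩
    constructor
    · by_contra hc
      push_neg at hc
      obtain ⟨s, hs, hval⟩ := intermediate_value_Icc ht.2
        (hcont.mono (Icc_subset_Icc htIcc.1 hT2t1))
        (show -a ∈ Icc (h t) (h T2) from ⟨hc.le, by rw [hhT2]; linarith⟩)
      have hsSb : s ∈ Sb := ⟨⟨le_trans htIcc.1 hs.1, hs.2⟩, hval⟩
      have h1 : s ≤ T1 := le_csSup hSb_bdd hsSb
      have h2 : t = T1 := le_antisymm (le_trans hs.1 h1) ht.1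
      rw [h2, hhT1] at hc
      linarith
    · by_contra hc
      push_neg at hc
      obtain ⟨s, hs, hval⟩ := intermediate_value_Icc ht.1
        (hcont.mono (Icc_subset_Icc hT1t0 htIcc.2))
        (show a ∈ Icc (h T1) (h t) from ⟨by rw [hhT1]; linarith, hc.le⟩)
      have hsSa : s ∈ Sa := ⟨⟨le_trans hT1t0 hs.1, le_trans hs.2 htIcc.2⟩, hval⟩
      have h1 : T2 ≤ s := csInf_le hSa_bdd hsSa
      have h2 : t = T2 := le_antisymm ht.2 (le_trans h1 hs.2)
      rw [h2, hhT2] at hc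
      linarith
  -- the integral of g over [T1, T2] equals 2a
  have hg1 : IntervalIntegrable g volume t0 T1 :=
    hgint.mono_set (hsub T1 ⟨hT1t0, le_trans hT12 hT2t1⟩)
  have hg2 : IntervalIntegrable g volume T1 T2 := by
    apply hgint.mono_set
    rw [uIcc_of_le hT12, uIcc_of_le ht01]
    exact Icc_subset_Icc hT1t0 hT2t1
  have hkey : ∫ s in T1..T2, g s = 2 * a := by
    have hadd := intervalIntegral.integral_add_adjacent_intervals hg1 hg2
    have e1 : h T1 = -(lam * a) + ∫ s in t0..T1, g s := rfl
    have e2 : h T2 = -(lam * a) + ∫ s in t0..T2, g s := rfl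
    have e3 : h T2 - h T1 = ∫ s in T1..T2, g s := by rw [e1, e2, ← hadd]; ring
    rw [← e3, hhT1, hhT2]; ring
  have hIoc_sub : Ioc T1 T2 ⊆ Icc t0 t1 := fun x hx =>
    ⟨le_trans hT1t0 (le_of_lt hx.1), le_trans hx.2 hT2t1⟩
  calc ENNReal.ofReal (2 * a) = ENNReal.ofReal (∫ s in Ioc T1 T2, g s) := by
        rw [← hkey, intervalIntegral.integral_of_le hT12]
    _ ≤ ∫⁻ s in Ioc T1 T2, ENNReal.ofReal (g s) := ofReal_integral_le hg2.1
    _ ≤ ∫⁻ t in Ioc T1 T2, ∫⁻ w, ENNReal.ofReal (Y (γ t) w) ∂ν t := by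
        apply lintegral_mono_ae
        have hnint' := ae_restrict_of_ae_restrict_of_subset hIoc_sub hnint
        filter_upwards [hnint', ae_restrict_mem measurableSet_Ioc] with t hti htmem
        have htIcc : t ∈ Icc t0 t1 := hIoc_sub htmem
        have hmemA : coord (γ t) 0 ∈ Icc (-a) a := by
          rw [coord_eq hd0, hcoord t htIcc]
          exact hmid t (Ioc_subset_Icc_self htmem)
        have hC : 0 ≤ ‖f₁ d (γ t)‖ + ‖f₂ d (γ t)‖ := by positivity
        have hint1 : Integrable (fun w : ℝ × ℝ => fvf d (γ t) w) (ν t) := by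
          refine Integrable.mono (hti.const_mul (‖f₁ d (γ t)‖ + ‖f₂ d (γ t)‖))
            ((fvf_cont (γ t)).aestronglyMeasurable) (ae_of_all _ fun w => ?_)
          calc ‖fvf d (γ t) w‖ ≤ (‖f₁ d (γ t)‖ + ‖f₂ d (γ t)‖) * ‖w‖ := fvf_norm _ _
            _ ≤ ‖(‖f₁ d (γ t)‖ + ‖f₂ d (γ t)‖) * ‖w‖‖ :=
                (le_abs_self _).trans_eq (Real.norm_eq_abs _).symm
        have hint2 : Integrable (fun w : ℝ × ℝ => w.1) (ν t) := by
          refine Integrable.mono hti continuous_fst.aestronglyMeasurable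
            (ae_of_all _ fun w => ?_)
          rw [norm_norm]; exact norm_fst_le w
        have hgt : g t = ∫ w, (w : ℝ × ℝ).1 ∂ν t := by
          rw [hgd]
          show L0 (F t) = _
          rw [hFd]
          show L0 (∫ w, fvf d (γ t) w ∂ν t) = _
          rw [← L0.integral_comp_comm hint1]
          congr 1; funext w
          exact fvf_coord hd0 _ _
        rw [hgt]
        calc ENNReal.ofReal (∫ w, (w : ℝ × ℝ).1 ∂ν t)
            ≤ ∫⁻ w, ENNReal.ofReal ((w : ℝ × ℝ).1) ∂ν t := ofReal_integral_le hint2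
          _ ≤ ∫⁻ w, ENNReal.ofReal (Y (γ t) w) ∂ν t :=
              lintegral_mono fun w => ENNReal.ofReal_le_ofReal (hY1 _ _ hmemA)
    _ ≤ ∫⁻ t in Icc t0 t1, ∫⁻ w, ENNReal.ofReal (Y (γ t) w) ∂ν t :=
        lintegral_mono_set hIoc_sub


set_option maxHeartbeats 1000000 in
/-- Lemma: the lower bound `2a`. If `Y ≥ 0` everywhere and
`Y(x,u) ≥ u₁` whenever `x₁ ∈ [-a,a]`, then every Young measure on `W` whose integral curve
joins `x₀` to `x₁` in time `[-a_δ, a_δ]` has `Y`-cost at least `2a`. In particular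
`M_c(L^∨,U_□) ≥ 2a` and `M_y(L^∨∨,U) ≥ 2a`. -/
theorem statement9 (d : ℕ) (hd : 4 ≤ d) (a b δ lam : ℝ) (hP : Params a b δ lam)
    (p : ℝ → ℝ) (hp : PProps p a b) (Γ : Set (E d)) (hΓ : ΓBasic d a b δ lam Γ)
    (U : Set (ℝ × ℝ)) (hUcl : IsClosed U) (hUcv : Convex ℝ U) (hUsq : Usq ⊆ U) :
    (∀ (W : Set (ℝ × ℝ)) (Y : E d → ℝ × ℝ → ℝ),
      (∀ x w, 0 ≤ Y x w) →
      (∀ (x : E d) (w : ℝ × ℝ), coord x 0 ∈ Icc (-a) a → w.1 ≤ Y x w) →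
      ∀ (ν : ℝ → Measure (ℝ × ℝ)) (γ : ℝ → E d),
        Young d (fvf d) W (-(a + δ)) (a + δ) (ηc d (-(lam * a))) ν γ →
        γ (a + δ) = ηc d (lam * a) →
        ENNReal.ofReal (2 * a)
          ≤ ∫⁻ t in Icc (-(a + δ)) (a + δ), ∫⁻ w, ENNReal.ofReal (Y (γ t) w) ∂ν t) ∧
    ((2 * a : ℝ) : EReal)
      ≤ Mc d Usq (Lvee d a) (-(a + δ)) (a + δ) (ηc d (-(lam * a))) (ηc d (lam * a))
          (closure (Sspiral d a b ∪ Γ)) ∧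
    ((2 * a : ℝ) : EReal)
      ≤ My d U (Lveevee d a) (-(a + δ)) (a + δ) (ηc d (-(lam * a))) (ηc d (lam * a))
          (closure (Sspiral d a b ∪ Γ)) := by
  obtain ⟨ha, ha1, hb, hab, hδ, hlam, hlam2, hld⟩ := hP
  have hd0 : 0 < d := by omega
  have part1 : ∀ (W : Set (ℝ × ℝ)) (Y : E d → ℝ × ℝ → ℝ),
      (∀ x w, 0 ≤ Y x w) →
      (∀ (x : E d) (w : ℝ × ℝ), coord x 0 ∈ Icc (-a) a → w.1 ≤ Y x w) →
      ∀ (ν : ℝ → Measure (ℝ × ℝ)) (γ : ℝ → E d),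
        Young d (fvf d) W (-(a + δ)) (a + δ) (ηc d (-(lam * a))) ν γ →
        γ (a + δ) = ηc d (lam * a) →
        ENNReal.ofReal (2 * a)
          ≤ ∫⁻ t in Icc (-(a + δ)) (a + δ), ∫⁻ w, ENNReal.ofReal (Y (γ t) w) ∂ν t :=
    fun W Y hY0 hY1 ν γ hYg hend => key_lemma d hd0 ha hδ hlam W Y hY0 hY1 ν γ hYg hend
  have ht01 : -(a + δ) ≤ a + δ := by linarith
  refine ⟨part1, ?_, ?_⟩
  · -- the bound for Mc
    apply le_sInf
    rintro c ⟨u, γ, ⟨hum, humem, hfi, heqc⟩, hS, hend, hLi, rfl⟩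
    have hUm : MeasurableSet Usq := measurableSet_Icc.prod measurableSet_Icc
    have hdint : ∀ s : ℝ, (∫ w, fvf d (γ s) w ∂Measure.dirac (u s)) = fvf d (γ s) (u s) :=
      fun s => integral_dirac _ _
    have hyoung : Young d (fvf d) Usq (-(a + δ)) (a + δ) (ηc d (-(lam * a)))
        (fun t => Measure.dirac (u t)) γ := by
      refine ⟨fun t => Measure.dirac.isProbabilityMeasure, ?_, ?_, ?_, ?_, ?_⟩
      · intro t ht
        rw [Measure.dirac_apply' _ hUm.compl]
        exact indicator_of_notMem (by simp [humem t ht]) _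
      · intro A hA
        simp only [Measure.dirac_apply' _ hA]
        exact (measurable_one.indicator hA).comp hum
      · refine ae_of_all _ fun t => ⟨continuous_norm.aestronglyMeasurable, ?_⟩
        show (∫⁻ w, ‖‖w‖‖₊ ∂Measure.dirac (u t)) < ⊤
        rw [lintegral_dirac]
        exact ENNReal.coe_lt_top
      · simp only [hdint]; exact hfi
      · intro t ht; simp only [hdint]; exact heqc t ht
    have hkey := part1 Usq (Lvee d a) (fun x w => Lvee_nonneg a x w)
      (fun x w hx => Lvee_ge a x w hx) _ γ hyoung hend
    have h2 : (∫⁻ t in Icc (-(a + δ)) (a + δ),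
          ∫⁻ w, ENNReal.ofReal (Lvee d a (γ t) w) ∂Measure.dirac (u t))
        = ∫⁻ t in Icc (-(a + δ)) (a + δ), ENNReal.ofReal (Lvee d a (γ t) (u t)) :=
      lintegral_congr fun t => lintegral_dirac _ _
    have hIntOn : IntegrableOn (fun t => Lvee d a (γ t) (u t)) (Icc (-(a + δ)) (a + δ)) :=
      (intervalIntegrable_iff_integrableOn_Icc_of_le ht01).1 hLi
    have h3 : (∫⁻ t in Icc (-(a + δ)) (a + δ), ENNReal.ofReal (Lvee d a (γ t) (u t)))
        = ENNReal.ofReal (∫ t in Icc (-(a + δ)) (a + δ), Lvee d a (γ t) (u t)) :=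
      (ofReal_integral_eq_lintegral_ofReal hIntOn
        (ae_of_all _ fun t => Lvee_nonneg a _ _)).symm
    have h4 : (∫ t in Icc (-(a + δ)) (a + δ), Lvee d a (γ t) (u t))
        = ∫ t in (-(a + δ))..(a + δ), Lvee d a (γ t) (u t) := by
      rw [intervalIntegral.integral_of_le ht01, integral_Icc_eq_integral_Ioc]
    rw [h2, h3, h4] at hkey
    rcases ENNReal.ofReal_le_ofReal_iff'.1 hkey with h5 | h5
    · exact EReal.coe_le_coe_iff.2 h5
    · exact absurd h5 (not_le.mpr (by linarith))
  · -- the bound for My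
    apply le_sInf
    rintro c ⟨ν, γ, hyoung, hS, hend, haeInt, hLi, rfl⟩
    have hkey := part1 U (Lveevee d a) (fun x w => Lveevee_nonneg a x w)
      (fun x w hx => Lveevee_ge a x w hx) ν γ hyoung hend
    have h2 : (∫⁻ t in Icc (-(a + δ)) (a + δ),
          ∫⁻ w, ENNReal.ofReal (Lveevee d a (γ t) w) ∂ν t)
        = ∫⁻ t in Icc (-(a + δ)) (a + δ), ENNReal.ofReal (∫ w, Lveevee d a (γ t) w ∂ν t) := by
      apply lintegral_congr_ae
      filter_upwards [haeInt] with t ht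
      exact (ofReal_integral_eq_lintegral_ofReal ht
        (ae_of_all _ fun w => Lveevee_nonneg a _ _)).symm
    have hIntOn : IntegrableOn (fun t => ∫ w, Lveevee d a (γ t) w ∂ν t)
        (Icc (-(a + δ)) (a + δ)) :=
      (intervalIntegrable_iff_integrableOn_Icc_of_le ht01).1 hLi
    have h3 : (∫⁻ t in Icc (-(a + δ)) (a + δ),
          ENNReal.ofReal (∫ w, Lveevee d a (γ t) w ∂ν t))
        = ENNReal.ofReal (∫ t in Icc (-(a + δ)) (a + δ), ∫ w, Lveevee d a (γ t) w ∂ν t) :=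
      (ofReal_integral_eq_lintegral_ofReal hIntOn
        (ae_of_all _ fun t => integral_nonneg fun w => Lveevee_nonneg a _ _)).symm
    have h4 : (∫ t in Icc (-(a + δ)) (a + δ), ∫ w, Lveevee d a (γ t) w ∂ν t)
        = ∫ t in (-(a + δ))..(a + δ), ∫ w, Lveevee d a (γ t) w ∂ν t := by
      rw [intervalIntegral.integral_of_le ht01, integral_Icc_eq_integral_Ioc]
    rw [h2, h3, h4] at hkey
    rcases ENNReal.ofReal_le_ofReal_iff'.1 hkey with h5 | h5
    · exact EReal.coe_le_coe_iff.2 h5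
    · exact absurd h5 (not_le.mpr (by linarith))

end SRGap
end
end
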